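/- Let K(A,B) be a complete bipartite graph whose edges are colored with two colors, blue and green, and suppose K(A,B) is an S1-type graph with X(G) ∪ Y(G) ⊆ A, where A = A1 ∪ A2 ∪ A3. Then the vertex set of K(A,B) can be partitioned into exactly min{|A1| + 1, |A3| + 1, min_i |b(Bi)| + 2, min_i |b(B̄i)| + 2} vertex-disjoint monochromatic trees (the inner minima being over all nonempty partitions B = Bi ∪ B̄i), and no partition into fewer vertex-disjoint monochromatic trees exists. -/

import Mathlib

/-!
Common definitions for edge-colored complete bipartite graphs.

The complete bipartite graph `K(A,B)` with partite sets `α` and `β` is modeled on the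
vertex type `α ⊕ β`; an edge-coloring with color type `γ` is a function `c : α → β → γ`
(giving the color of the edge between `a : α` and `b : β`).
-/

/-- The spanning subgraph of the complete bipartite graph on parts `α`, `β` consisting of
the edges of color `k`, under the edge-coloring `c`. -/
def biColorGraph {α β γ : Type*} (c : α → β → γ) (k : γ) : SimpleGraph (α ⊕ β) where
  Adj x y := (∃ a b, x = Sum.inl a ∧ y = Sum.inr b ∧ c a b = k) ∨
             (∃ a b, x = Sum.inr b ∧ y = Sum.inl a ∧ c a b = k)
  symm := by
    constructor
    rintro x y (⟨a, b, hx, hy, hc⟩ | ⟨a, b, hx, hy, hc⟩)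
    · exact Or.inr ⟨a, b, hy, hx, hc⟩
    · exact Or.inl ⟨a, b, hy, hx, hc⟩
  loopless := by
    constructor
    rintro x (⟨a, b, hx, hy, _⟩ | ⟨a, b, hx, hy, _⟩) <;> subst hx <;> simp at hy

/-- `S` is the vertex set of a monochromatic tree: it induces a connected subgraph in some
color class.  (A single vertex also counts as a monochromatic tree.) -/
def IsMonoTreeSet {α β γ : Type*} (c : α → β → γ) (S : Set (α ⊕ β)) : Prop :=
  ∃ k, ((biColorGraph c k).induce S).Connected

/-- `P` is a partition of the vertex set of the complete bipartite graph into
(nonempty, pairwise vertex-disjoint) vertex sets of monochromatic trees. -/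
def IsMonoTreePartition {α β γ : Type*} (c : α → β → γ) (P : Finset (Set (α ⊕ β))) : Prop :=
  (∀ S ∈ P, IsMonoTreeSet c S) ∧ ∀ x : α ⊕ β, ∃! S, S ∈ P ∧ x ∈ S

/-- The vertex set can be partitioned into at most `m` vertex-disjoint monochromatic trees. -/
def HasMonoTreePartition {α β γ : Type*} (c : α → β → γ) (m : ℕ) : Prop :=
  ∃ P : Finset (Set (α ⊕ β)), IsMonoTreePartition c P ∧ P.card ≤ m

/-- Every vertex has color degree 3, i.e. all three colors appear on its incident edges. -/
def ColorDegreeThree {α β : Type*} (c : α → β → Fin 3) : Prop :=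
  (∀ (a : α) (k : Fin 3), ∃ b, c a b = k) ∧ ∀ (b : β) (k : Fin 3), ∃ a, c a b = k

/-! For 2-edge-colorings we use `Bool` as the color type: `true` = blue, `false` = green. -/

/-- The vertices of `α` all of whose incident edges are blue. -/
def XA {α β : Type*} (c : α → β → Bool) : Set α := {a | ∀ b, c a b = true}

/-- The vertices of `α` all of whose incident edges are green. -/
def YA {α β : Type*} (c : α → β → Bool) : Set α := {a | ∀ b, c a b = false}

/-- The vertices of `β` all of whose incident edges are blue. -/
def XB {α β : Type*} (c : α → β → Bool) : Set β := {b | ∀ a, c a b = true}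

/-- The vertices of `β` all of whose incident edges are green. -/
def YB {α β : Type*} (c : α → β → Bool) : Set β := {b | ∀ a, c a b = false}

/-- `S`-type graph: `X(G) ≠ ∅` and `Y(G) ≠ ∅`. -/
def IsSType {α β : Type*} (c : α → β → Bool) : Prop :=
  ((XA c).Nonempty ∨ (XB c).Nonempty) ∧ ((YA c).Nonempty ∨ (YB c).Nonempty)

/-- `M`-type graph: there are partitions `A = A1 ∪ A1ᶜ`, `B = B1 ∪ B1ᶜ` with all four parts
nonempty such that `K(A1,B1)` and `K(A1ᶜ,B1ᶜ)` are blue and `K(A1,B1ᶜ)`, `K(A1ᶜ,B1)`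
are green. -/
def IsMType {α β : Type*} (c : α → β → Bool) : Prop :=
  ∃ (A1 : Set α) (B1 : Set β),
    A1.Nonempty ∧ A1ᶜ.Nonempty ∧ B1.Nonempty ∧ B1ᶜ.Nonempty ∧
    (∀ a ∈ A1, ∀ b ∈ B1, c a b = true) ∧
    (∀ a ∈ A1ᶜ, ∀ b ∈ B1ᶜ, c a b = true) ∧
    (∀ a ∈ A1, ∀ b ∈ B1ᶜ, c a b = false) ∧
    (∀ a ∈ A1ᶜ, ∀ b ∈ B1, c a b = false)

/-- For a subset `Bi ⊆ B`, the set `b(Bi) ⊆ A` of vertices sending blue edges to all of `Bi`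
and green edges to all of `Biᶜ`.  (Thus `b(B̄i) = bsetA c Biᶜ`.) -/
def bsetA {α β : Type*} (c : α → β → Bool) (Bi : Set β) : Set α :=
  {a | (∀ b ∈ Bi, c a b = true) ∧ ∀ b ∈ Biᶜ, c a b = false}

/-- For a subset `Ai ⊆ A`, the set `b(Ai) ⊆ B` of vertices sending blue edges to all of `Ai`
and green edges to all of `Aiᶜ`. -/
def bsetB {α β : Type*} (c : α → β → Bool) (Ai : Set α) : Set β :=
  {b | (∀ a ∈ Ai, c a b = true) ∧ ∀ a ∈ Aiᶜ, c a b = false}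

/-- `S1*`-type graph with `X(G) ∪ Y(G) ⊆ A`: `|B| = 1`, `|A1| ≥ 2` and `|A3| ≥ 2`
(where `A1 = X(G)`, `A3 = Y(G)`). -/
def IsS1StarA {α β : Type*} [Fintype β] (c : α → β → Bool) : Prop :=
  Fintype.card β = 1 ∧ 2 ≤ (XA c).ncard ∧ 2 ≤ (YA c).ncard

/-- `S1'`-type graph with `X(G) ∪ Y(G) ⊆ A`: `|A1| ≥ 2`, `|A3| ≥ 2`, `|B| ≥ 2`, and for
every partition `B = Bi ∪ B̄i` into nonempty parts, `b(Bi) ≠ ∅` and `b(B̄i) ≠ ∅`. -/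
def IsS1PrimeA {α β : Type*} [Fintype β] (c : α → β → Bool) : Prop :=
  2 ≤ (XA c).ncard ∧ 2 ≤ (YA c).ncard ∧ 2 ≤ Fintype.card β ∧
  ∀ Bi : Set β, Bi.Nonempty → Biᶜ.Nonempty →
    (bsetA c Bi).Nonempty ∧ (bsetA c Biᶜ).Nonempty

/-- `S1*`-type graph with `X(G) ∪ Y(G) ⊆ B`. -/
def IsS1StarB {α β : Type*} [Fintype α] (c : α → β → Bool) : Prop :=
  Fintype.card α = 1 ∧ 2 ≤ (XB c).ncard ∧ 2 ≤ (YB c).ncard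

/-- `S1'`-type graph with `X(G) ∪ Y(G) ⊆ B`. -/
def IsS1PrimeB {α β : Type*} [Fintype α] (c : α → β → Bool) : Prop :=
  2 ≤ (XB c).ncard ∧ 2 ≤ (YB c).ncard ∧ 2 ≤ Fintype.card α ∧
  ∀ Ai : Set α, Ai.Nonempty → Aiᶜ.Nonempty →
    (bsetB c Ai).Nonempty ∧ (bsetB c Aiᶜ).Nonempty

/-- `S1`-type graph: `S1*`-type or `S1'`-type. -/
def IsS1 {α β : Type*} [Fintype α] [Fintype β] (c : α → β → Bool) : Prop :=
  IsS1StarA c ∨ IsS1PrimeA c ∨ IsS1StarB c ∨ IsS1PrimeB c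

/-- `S2`-type graph: an `S`-type graph that is not `S1`-type. -/
def IsS2 {α β : Type*} [Fintype α] [Fintype β] (c : α → β → Bool) : Prop :=
  IsSType c ∧ ¬ IsS1 c

/-!
Colour every vertex `b ∈ B` by the colour `f b` of the tree containing it. A vertex `a ∈ A`
that has an edge `ab` of colour `f b` can join the tree of `b`; the others can only be
singletons. So at least `|{a | ∀ b, c a b ≠ f b}| + |range f|` trees are needed, and when
every colour has a vertex of `A` all of whose edges have that colour (a hub joining all the
trees of that colour into one), this many suffice. For two colours, `f ≡ false` costs
`|A1| + 1`, `f ≡ true` costs `|A3| + 1`, and a surjective `f` costs `|b(f⁻¹ false)| + 2`.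
-/

open Function

section General

variable {α β γ : Type*}

lemma biColorGraph_adj_inl_iff {c : α → β → γ} {k : γ} {a : α} {y : α ⊕ β} :
    (biColorGraph c k).Adj (.inl a) y ↔ ∃ b, y = .inr b ∧ c a b = k := by
  simp [biColorGraph, eq_comm]

lemma biColorGraph_adj_inl_inr {c : α → β → γ} {k : γ} {a : α} {b : β} :
    (biColorGraph c k).Adj (.inl a) (.inr b) ↔ c a b = k := by
  simp [biColorGraph_adj_inl_iff]

lemma SimpleGraph.eq_singleton_of_induce_connected {V : Type*} {G : SimpleGraph V} {S : Set V}
    (hS : (G.induce S).Connected) {x : V} (hx : x ∈ S) (hnadj : ∀ y ∈ S, ¬ G.Adj x y) :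
    S = {x} := by
  refine Set.eq_singleton_iff_unique_mem.2 ⟨hx, fun y hy => by_contra fun hyx => ?_⟩
  obtain ⟨p⟩ := hS.preconnected ⟨x, hx⟩ ⟨y, hy⟩
  have hne : ¬ p.Nil := SimpleGraph.Walk.not_nil_of_ne fun h => hyx (congrArg Subtype.val h).symm
  exact hnadj _ p.snd.2 (SimpleGraph.Walk.adj_snd hne)

lemma isMonoTreeSet_singleton [Nonempty γ] (c : α → β → γ) (x : α ⊕ β) :
    IsMonoTreeSet c {x} :=
  ⟨Classical.arbitrary γ, (SimpleGraph.connected_iff_exists_forall_reachable _).2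
    ⟨⟨x, rfl⟩, fun ⟨y, hy⟩ => by subst hy; rfl⟩⟩

lemma isMonoTreeSet_of_hub (c : α → β → γ) (k : γ) {S : Set (α ⊕ β)} {a₀ : α}
    (ha₀ : .inl a₀ ∈ S) (hhub : ∀ b, .inr b ∈ S → c a₀ b = k)
    (hA : ∀ a, .inl a ∈ S → ∃ b, .inr b ∈ S ∧ c a b = k) :
    IsMonoTreeSet c S := by
  refine ⟨k, (SimpleGraph.connected_iff_exists_forall_reachable _).2 ⟨⟨_, ha₀⟩, ?_⟩⟩
  have reach_inr : ∀ b (hb : .inr b ∈ S),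
      ((biColorGraph c k).induce S).Reachable ⟨_, ha₀⟩ ⟨.inr b, hb⟩ := fun b hb =>
    SimpleGraph.Adj.reachable (biColorGraph_adj_inl_inr.2 (hhub b hb))
  rintro ⟨a | b, hx⟩
  · obtain ⟨b, hb, hab⟩ := hA a hx
    exact (reach_inr b hb).trans
      (SimpleGraph.Adj.reachable (G := (biColorGraph c k).induce S)
        (biColorGraph_adj_inl_inr.2 hab).symm)
  · exact reach_inr b hx

end General

section LowerBound

variable {α β γ : Type*}

def isolatedA (c : α → β → γ) (f : β → γ) : Set α := {a | ∀ b, c a b ≠ f b}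

noncomputable def treeCost (c : α → β → γ) (f : β → γ) : ℕ :=
  (isolatedA c f).ncard + (Set.range f).ncard

theorem IsMonoTreePartition.exists_treeCost_le {c : α → β → γ} {P : Finset (Set (α ⊕ β))}
    (hP : IsMonoTreePartition c P) : ∃ f : β → γ, treeCost c f ≤ P.card := by
  obtain ⟨hmono, huniq⟩ := hP
  choose part hpart using fun x =>
    let ⟨S, hS, hx⟩ := (huniq x).exists
    (⟨⟨S, hS⟩, hx⟩ : ∃ S : P, x ∈ S.1)
  have part_eq : ∀ {x : α ⊕ β} {S : P}, x ∈ S.1 → S = part x := fun {x} S hx =>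
    Subtype.ext ((huniq x).unique ⟨S.2, hx⟩ ⟨(part x).2, hpart x⟩)
  choose col hcol using fun S : P => hmono S.1 S.2
  let f : β → γ := col ∘ part ∘ .inr
  refine ⟨f, ?_⟩
  have hsingle : ∀ a ∈ isolatedA c f, (part (.inl a)).1 = {.inl a} := by
    intro a ha
    refine SimpleGraph.eq_singleton_of_induce_connected (hcol _) (hpart _) ?_
    rintro y hy hadj
    obtain ⟨b, rfl, hab⟩ := biColorGraph_adj_inl_iff.1 hadj
    exact ha b (by simp only [f, comp_apply, ← part_eq hy, hab])
  have hdisj : Disjoint (part ∘ .inl '' isolatedA c f) (Set.range (part ∘ .inr)) := by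
    refine Set.disjoint_left.2 ?_
    rintro _ ⟨a, ha, rfl⟩ ⟨b, hb : part (.inr b) = part (.inl a)⟩
    have hb' : (.inr b : α ⊕ β) ∈ (part (.inl a)).1 := hb ▸ hpart _
    simp [hsingle a ha] at hb'
  have hinj : Set.InjOn (part ∘ .inl) (isolatedA c f) := fun a ha a' ha' h => by
    simpa [hsingle a ha, hsingle a' ha'] using congrArg Subtype.val h
  calc treeCost c f
      ≤ (part ∘ .inl '' isolatedA c f).ncard + (Set.range (part ∘ .inr)).ncard := by
        rw [treeCost, hinj.ncard_image, Set.range_comp col]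
        exact Nat.add_le_add_left Set.ncard_image_le _
    _ = (part ∘ .inl '' isolatedA c f ∪ Set.range (part ∘ .inr)).ncard :=
        (Set.ncard_union_eq hdisj).symm
    _ ≤ Nat.card P := Set.ncard_le_card _
    _ = P.card := by simp

end LowerBound

section Construction

variable {α β γ : Type*}

lemma exists_isMonoTreePartition_of_fibers [Fintype α] [Fintype β] {ι : Type*}
    (c : α → β → γ) (ℓ : α ⊕ β → ι) (hℓ : ∀ x, IsMonoTreeSet c (ℓ ⁻¹' {ℓ x})) :
    ∃ P, IsMonoTreePartition c P ∧ P.card ≤ (Set.range ℓ).ncard := by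
  classical
  refine ⟨Finset.univ.image fun x => ℓ ⁻¹' {ℓ x}, ⟨?_, fun x => ⟨ℓ ⁻¹' {ℓ x}, by simp, ?_⟩⟩, ?_⟩
  · intro S hS
    obtain ⟨x, -, rfl⟩ := Finset.mem_image.1 hS
    exact hℓ x
  · rintro _ ⟨hS, hx⟩
    obtain ⟨y, -, rfl⟩ := Finset.mem_image.1 hS
    rw [Set.mem_preimage, Set.mem_singleton_iff] at hx
    rw [hx]
  · rw [← Set.ncard_coe_finset, Finset.coe_image, Finset.coe_univ, Set.image_univ]
    change (Set.range ((fun i => ℓ ⁻¹' {i}) ∘ ℓ)).ncard ≤ _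
    rw [Set.range_comp]
    exact Set.ncard_image_le (Set.finite_range ℓ)

open Classical in
/-- The fibres of this labelling are the trees: `b` goes to the tree of colour `f b`, and `a` to
the tree of colour `c a b` for some `b` with `c a b = f b`; the label `.inr a` makes `a` a
singleton. -/
noncomputable def treeLabel (c : α → β → γ) (f : β → γ) : α ⊕ β → γ ⊕ α
  | .inl a => if h : ∃ b, c a b = f b then .inl (c a h.choose) else .inr a
  | .inr b => .inl (f b)

variable {c : α → β → γ} {f : β → γ}

lemma treeLabel_eq_inr_iff {x : α ⊕ β} {a : α} :
    treeLabel c f x = .inr a ↔ x = .inl a ∧ a ∈ isolatedA c f := by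
  rcases x with a' | b
  · by_cases h : ∃ b, c a' b = f b
    · simp only [treeLabel, h, dite_true, reduceCtorEq, false_iff, not_and, Sum.inl.injEq]
      rintro rfl ha
      exact absurd h (by simpa [isolatedA] using ha)
    · simp_all [treeLabel, isolatedA, eq_comm]
  · simp [treeLabel]

lemma exists_of_treeLabel_eq_inl {x : α ⊕ β} {k : γ} (hx : treeLabel c f x = .inl k) :
    ∃ b, f b = k ∧ (x = .inr b ∨ ∃ a, x = .inl a ∧ c a b = k) := by
  rcases x with a | b
  · by_cases h : ∃ b, c a b = f b
    · simp only [treeLabel, h, dite_true, Sum.inl.injEq] at hx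
      exact ⟨h.choose, h.choose_spec.symm.trans hx, .inr ⟨a, rfl, hx⟩⟩
    · simp [treeLabel, h] at hx
  · exact ⟨b, Sum.inl_injective hx, .inl rfl⟩

lemma treeLabel_inl_of_forall {a : α} {k : γ} (ha : ∀ b, c a b = k) (hk : ∃ b, f b = k) :
    treeLabel c f (.inl a) = .inl k := by
  obtain ⟨b, hb⟩ := hk
  have h : ∃ b, c a b = f b := ⟨b, (ha b).trans hb.symm⟩
  rw [treeLabel, dif_pos h, ha]

lemma isMonoTreeSet_treeLabel_fiber [Nonempty γ] (hhub : ∀ k, ∃ a, ∀ b, c a b = k)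
    (x : α ⊕ β) : IsMonoTreeSet c (treeLabel c f ⁻¹' {treeLabel c f x}) := by
  rcases hx : treeLabel c f x with k | a
  · obtain ⟨a₀, ha₀⟩ := hhub k
    obtain ⟨b₀, hb₀, -⟩ := exists_of_treeLabel_eq_inl hx
    refine isMonoTreeSet_of_hub c k (a₀ := a₀) (treeLabel_inl_of_forall ha₀ ⟨b₀, hb₀⟩)
      (fun b _ => ha₀ b) fun a ha => ?_
    obtain ⟨b, hb, hab⟩ := exists_of_treeLabel_eq_inl ha
    refine ⟨b, congrArg Sum.inl hb, ?_⟩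
    simpa using hab
  · obtain ⟨rfl, ha⟩ := treeLabel_eq_inr_iff.1 hx
    convert isMonoTreeSet_singleton c (.inl a : α ⊕ β)
    ext y
    simp [treeLabel_eq_inr_iff, ha]

lemma range_treeLabel_subset :
    Set.range (treeLabel c f) ⊆ .inl '' Set.range f ∪ .inr '' isolatedA c f := by
  rintro _ ⟨x, rfl⟩
  rcases hx : treeLabel c f x with k | a
  · obtain ⟨b, hb, -⟩ := exists_of_treeLabel_eq_inl hx
    exact .inl ⟨k, ⟨b, hb⟩, rfl⟩
  · exact .inr ⟨a, (treeLabel_eq_inr_iff.1 hx).2, rfl⟩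

theorem exists_isMonoTreePartition_card_le_treeCost [Fintype α] [Fintype β] [Nonempty γ]
    (hhub : ∀ k, ∃ a, ∀ b, c a b = k) (f : β → γ) :
    ∃ P, IsMonoTreePartition c P ∧ P.card ≤ treeCost c f := by
  obtain ⟨P, hP, hcard⟩ :=
    exists_isMonoTreePartition_of_fibers c (treeLabel c f) (isMonoTreeSet_treeLabel_fiber hhub)
  refine ⟨P, hP, hcard.trans ?_⟩
  calc (Set.range (treeLabel c f)).ncard
      ≤ (.inl '' Set.range f ∪ .inr '' isolatedA c f : Set (γ ⊕ α)).ncard :=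
        Set.ncard_le_ncard range_treeLabel_subset
          (((Set.finite_range f).image _).union ((Set.toFinite _).image _))
    _ ≤ _ := Set.ncard_union_le _ _
    _ = treeCost c f := by
        rw [Set.ncard_image_of_injective _ Sum.inl_injective,
          Set.ncard_image_of_injective _ Sum.inr_injective, treeCost, add_comm]

end Construction

section TwoColours

variable {α β : Type*} (c : α → β → Bool)

lemma isolatedA_const_false : isolatedA c (fun _ => false) = XA c := by
  ext a; simp [isolatedA, XA]

lemma isolatedA_const_true : isolatedA c (fun _ => true) = YA c := by
  ext a; simp [isolatedA, YA]

lemma isolatedA_eq_bsetA (f : β → Bool) : isolatedA c f = bsetA c {b | f b = false} := by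
  ext a
  simp only [isolatedA, bsetA, Set.mem_ofPred_eq, Set.mem_compl_iff, ← forall_and]
  refine forall_congr' fun b => ?_
  cases c a b <;> cases f b <;> simp

lemma treeCost_const [Nonempty β] (k : Bool) :
    treeCost c (fun _ => k) = (isolatedA c fun _ => k).ncard + 1 := by
  rw [treeCost, Set.range_const, Set.ncard_singleton]

lemma treeCost_of_surjective {f : β → Bool} (hf : Surjective f) :
    treeCost c f = (bsetA c {b | f b = false}).ncard + 2 := by
  rw [treeCost, isolatedA_eq_bsetA, hf.range_eq, Set.ncard_univ, Nat.card_eq_fintype_card,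
    Fintype.card_bool]

lemma exists_treeCost_eq_bsetA {Bi : Set β} (h₁ : Bi.Nonempty) (h₂ : Biᶜ.Nonempty) :
    ∃ f, treeCost c f = (bsetA c Bi).ncard + 2 := by
  classical
  obtain ⟨b₁, hb₁⟩ := h₁
  obtain ⟨b₂, hb₂⟩ := h₂
  refine ⟨fun b => decide (b ∉ Bi), ?_⟩
  have hf : Surjective fun b => decide (b ∉ Bi) :=
    Bool.forall_bool.2 ⟨⟨b₁, by simpa using hb₁⟩, ⟨b₂, by simpa using hb₂⟩⟩
  rw [treeCost_of_surjective c hf]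
  simp

lemma eq_const_or_eq_const_or_surjective (f : β → Bool) :
    f = (fun _ => false) ∨ f = (fun _ => true) ∨ Surjective f := by
  by_cases h₁ : ∃ b, f b = false
  · by_cases h₂ : ∃ b, f b = true
    · exact .inr (.inr (Bool.forall_bool.2 ⟨h₁, h₂⟩))
    · exact .inl (funext fun b => by simpa using fun h => h₂ ⟨b, h⟩)
  · exact .inr (.inl (funext fun b => by simpa using fun h => h₁ ⟨b, h⟩))

lemma range_treeCost_eq [Nonempty β] :
    Set.range (treeCost c) = ({(XA c).ncard + 1, (YA c).ncard + 1} : Set ℕ) ∪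
      {n : ℕ | ∃ Bi : Set β, Bi.Nonempty ∧ Biᶜ.Nonempty ∧ n = (bsetA c Bi).ncard + 2} ∪
      {n : ℕ | ∃ Bi : Set β, Bi.Nonempty ∧ Biᶜ.Nonempty ∧ n = (bsetA c Biᶜ).ncard + 2} := by
  ext n
  simp only [Set.mem_union, Set.mem_insert_iff, Set.mem_singleton_iff, Set.mem_ofPred_eq]
  constructor
  · rintro ⟨f, rfl⟩
    rcases eq_const_or_eq_const_or_surjective f with rfl | rfl | hf
    · exact .inl (.inl (.inl (by rw [treeCost_const, isolatedA_const_false])))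
    · exact .inl (.inl (.inr (by rw [treeCost_const, isolatedA_const_true])))
    · obtain ⟨b₁, hb₁⟩ := hf false
      obtain ⟨b₂, hb₂⟩ := hf true
      exact .inl (.inr ⟨_, ⟨b₁, hb₁⟩, ⟨b₂, by simp [hb₂]⟩, treeCost_of_surjective c hf⟩)
  · rintro (((rfl | rfl) | ⟨Bi, h₁, h₂, rfl⟩) | ⟨Bi, h₁, h₂, rfl⟩)
    · exact ⟨_, (treeCost_const c false).trans (by rw [isolatedA_const_false])⟩
    · exact ⟨_, (treeCost_const c true).trans (by rw [isolatedA_const_true])⟩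
    · exact exists_treeCost_eq_bsetA c h₁ h₂
    · exact exists_treeCost_eq_bsetA c h₂ (by rwa [compl_compl])

end TwoColours

/-- If a 2-edge-colored complete bipartite graph `K(A,B)` is an `S1`-type
graph with `X(G) ∪ Y(G) ⊆ A` (writing `A = A1 ∪ A2 ∪ A3`), then its vertex set can be
partitioned into exactly
`min {|A1| + 1, |A3| + 1, min_i |b(Bi)| + 2, min_i |b(B̄i)| + 2}`
vertex-disjoint monochromatic trees (the inner minima over all partitions `B = Bi ∪ B̄i`
into nonempty parts), and no partition into fewer vertex-disjoint monochromatic trees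
exists. -/
theorem s1type_exact_partition_number {α β : Type*} [Fintype α] [Fintype β]
    (c : α → β → Bool) (h : IsS1StarA c ∨ IsS1PrimeA c) :
    (∃ P : Finset (Set (α ⊕ β)), IsMonoTreePartition c P ∧
      P.card = sInf (({(XA c).ncard + 1, (YA c).ncard + 1} : Set ℕ) ∪
        {n : ℕ | ∃ Bi : Set β, Bi.Nonempty ∧ Biᶜ.Nonempty ∧ n = (bsetA c Bi).ncard + 2} ∪
        {n : ℕ | ∃ Bi : Set β, Bi.Nonempty ∧ Biᶜ.Nonempty ∧ n = (bsetA c Biᶜ).ncard + 2})) ∧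
    ∀ P : Finset (Set (α ⊕ β)), IsMonoTreePartition c P →
      sInf (({(XA c).ncard + 1, (YA c).ncard + 1} : Set ℕ) ∪
        {n : ℕ | ∃ Bi : Set β, Bi.Nonempty ∧ Biᶜ.Nonempty ∧ n = (bsetA c Bi).ncard + 2} ∪
        {n : ℕ | ∃ Bi : Set β, Bi.Nonempty ∧ Biᶜ.Nonempty ∧ n = (bsetA c Biᶜ).ncard + 2})
      ≤ P.card := by
  obtain ⟨hβ, hX, hY⟩ : 0 < Fintype.card β ∧ (XA c).ncard ≠ 0 ∧ (YA c).ncard ≠ 0 := by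
    rcases h with ⟨hB, hX, hY⟩ | ⟨hX, hY, hB, -⟩ <;> omega
  have : Nonempty β := Fintype.card_pos_iff.1 hβ
  have hhub : ∀ k, ∃ a, ∀ b, c a b = k :=
    Bool.forall_bool.2 ⟨Set.nonempty_of_ncard_ne_zero hY, Set.nonempty_of_ncard_ne_zero hX⟩
  rw [← range_treeCost_eq]
  have lower : ∀ P, IsMonoTreePartition c P → sInf (Set.range (treeCost c)) ≤ P.card := by
    intro P hP
    obtain ⟨f, hf⟩ := hP.exists_treeCost_le
    exact (Nat.sInf_le (Set.mem_range_self f)).trans hf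
  obtain ⟨f, hf⟩ := Nat.sInf_mem (Set.range_nonempty (treeCost c))
  obtain ⟨P, hP, hcard⟩ := exists_isMonoTreePartition_card_le_treeCost hhub f
  exact ⟨⟨P, hP, le_antisymm (hf ▸ hcard) (lower P hP)⟩, lower⟩
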